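/- arXiv:2108.10849 — 5 statements merged into one kernel-verified Lean document; each statement's English description precedes it below -/
import Mathlib

section
/- Let 𝔛 be a discrete (finite or countable) set, G an irreducible positive recurrent generator matrix on 𝔛 with stationary distribution μ, and let ν = Σ_{j≥1} P_j δ_{T_j} be the Markovian stick-breaking measure built from P ∼ GEM(θ) and the stationary Markov chain T with kernel Q = I + G/θ, independent of P. For n ≥ 1, let J₁,…,Jₙ be positive-integer-valued random variables on the same probability space such that P(J₁ = j₁, …, Jₙ = jₙ | P, T) = ∏_{i=1}^n P_{j_i} almost surely for all (j₁,…,jₙ), and set Y_i = T_{J_i} for 1 ≤ i ≤ n. Then almost surely, for every y^n = (y₁,…,yₙ) ∈ 𝔛^n, P(Y₁ = y₁, …, Yₙ = yₙ | σ(ν, T₁)) = ∏_{i=1}^n ν({y_i}); that is, conditionally on (ν, T₁), the variables Y₁,…,Yₙ are i.i.d. with common distribution ν. -/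
open MeasureTheory ProbabilityTheory Filter

noncomputable section

/-- The Beta(1,θ) law on ℝ: density θ(1-x)^(θ-1) on [0,1]. -/
def beta1 (θ : ℝ) : Measure ℝ :=
  (volume.restrict (Set.Icc (0:ℝ) 1)).withDensity fun x => ENNReal.ofReal (θ * (1-x)^(θ-1))

/-- Stick lengths of a residual allocation model: `stick X j` is `P_{j+1}`. -/
def stick {Ω : Type*} (X : ℕ → Ω → ℝ) (j : ℕ) (ω : Ω) : ℝ :=
  X j ω * ∏ i ∈ Finset.range j, (1 - X i ω)

/-- The random measure ν(A) = Σ_j P_j 1{T_j ∈ A}. -/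
def nuSB {Ω 𝔛 : Type*} (X : ℕ → Ω → ℝ) (T : ℕ → Ω → 𝔛) (A : Set 𝔛) (ω : Ω) : ℝ :=
  ∑' j, stick X j ω * A.indicator (fun _ => (1:ℝ)) (T j ω)

/-- Conditional expectation given an event: E[Z | E] = E[Z 1_E]/P(E). -/
def cexp {Ω : Type*} [MeasurableSpace Ω] (Pr : Measure Ω) (Z : Ω → ℝ) (E : Set Ω) : ℝ :=
  (∫ ω in E, Z ω ∂Pr) / (Pr E).toReal

end

/-!
Since `ν` and `T₁` are functions of `(P, T)`, we have `σ(ν, T₁) ≤ σ(P, T)`, so by the tower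
property it suffices to compute the conditional law of `Y` given `(P, T)` and to observe that it is
already `σ(ν, T₁)`-measurable. Splitting `{Y = y}` according to the value `k` of `J` gives the
disjoint union of the sets `{J = k} ∩ {T_{kᵢ} = yᵢ for all i}`, whose second factor is
`σ(P, T)`-measurable; hence the conditional probability given `(P, T)` is
`∑_k ∏ᵢ P_{kᵢ} 1{T_{kᵢ} = yᵢ} = ∏ᵢ ν{yᵢ}`, the last step expanding a finite product of
nonnegative series.
-/

theorem hasSum_fin_prod_of_nonneg {κ : Type*} {n : ℕ} {a : Fin n → κ → ℝ} {s : Fin n → ℝ}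
    (ha : ∀ i, HasSum (a i) (s i)) (h0 : ∀ i k, 0 ≤ a i k) :
    HasSum (fun k : Fin n → κ => ∏ i, a i (k i)) (∏ i, s i) := by
  induction n with
  | zero => simp
  | succ n ih =>
    have htail :
        HasSum (fun k : Fin n → κ => ∏ i : Fin n, a i.succ (k i)) (∏ i : Fin n, s i.succ) :=
      ih (fun i => ha i.succ) (fun i => h0 i.succ)
    have hsummable : Summable fun p : κ × (Fin n → κ) => a 0 p.1 * ∏ i : Fin n, a i.succ (p.2 i) :=
      Summable.mul_of_nonneg (f := a 0) (g := fun k : Fin n → κ => ∏ i : Fin n, a i.succ (k i))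
        (ha 0).summable htail.summable (h0 0) fun k => Finset.prod_nonneg fun i _ => h0 i.succ (k i)
    have hcons : (fun k => ∏ i, a i (k i)) ∘ Fin.consEquiv (fun _ => κ) =
        fun p => a 0 p.1 * ∏ i : Fin n, a i.succ (p.2 i) := by
      ext p
      simp [Fin.consEquiv, Fin.prod_univ_succ]
    rw [← (Fin.consEquiv fun _ => κ).hasSum_iff, hcons, Fin.prod_univ_succ]
    exact HasSum.mul (f := a 0) (g := fun k : Fin n → κ => ∏ i : Fin n, a i.succ (k i))
      (ha 0) htail hsummable

section ConditionalExpectation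

open Function

variable {Ω E : Type*} {m m₁ m₂ m₀ : MeasurableSpace Ω} {μ : Measure Ω}
  [NormedAddCommGroup E] [NormedSpace ℝ E] [CompleteSpace E]

theorem condExp_ae_eq_of_condExp_ae_eq_of_le (h₁₂ : m₁ ≤ m₂) (h₂ : m₂ ≤ m₀)
    [SigmaFinite (μ.trim h₂)] [SigmaFinite (μ.trim (h₁₂.trans h₂))] {f g : Ω → E}
    (hg : StronglyMeasurable[m₁] g) (hfg : μ[f | m₂] =ᵐ[μ] g) : μ[f | m₁] =ᵐ[μ] g :=
  calc μ[f | m₁] =ᵐ[μ] μ[μ[f | m₂] | m₁] := (condExp_condExp_of_le h₁₂ h₂).symm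
    _ =ᵐ[μ] μ[g | m₁] := condExp_congr_ae hfg
    _ = g := condExp_of_stronglyMeasurable _ hg (integrable_condExp.congr hfg)

theorem Set.indicator_iUnion_apply_eq_tsum {α ι M : Type*} [AddCommMonoid M] [TopologicalSpace M]
    {s : ι → Set α} (hs : Pairwise (Disjoint on s)) (f : α → M) (a : α) :
    (⋃ i, s i).indicator f a = ∑' i, (s i).indicator f a := by
  by_cases ha : a ∈ ⋃ i, s i
  · obtain ⟨i, hi⟩ := Set.mem_iUnion.mp ha
    rw [Set.indicator_of_mem ha, tsum_eq_single i, Set.indicator_of_mem hi]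
    exact fun j hji => Set.indicator_of_notMem ((hs hji).notMem_of_mem_right hi) f
  · rw [Set.indicator_of_notMem ha, tsum_congr fun i =>
      Set.indicator_of_notMem (fun hi => ha (Set.mem_iUnion_of_mem i hi)) f, tsum_zero]

theorem condExp_indicator_iUnion_inter {ι : Type*} [Countable ι] [IsFiniteMeasure μ]
    (hm : m ≤ m₀) {B C : ι → Set Ω} (hB : ∀ i, MeasurableSet[m₀] (B i))
    (hBd : Pairwise (Disjoint on B)) (hC : ∀ i, MeasurableSet[m] (C i)) :
    μ[(⋃ i, C i ∩ B i).indicator (fun _ => (1 : ℝ)) | m] =ᵐ[μ]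
      fun ω => ∑' i, (C i).indicator (μ[(B i).indicator (fun _ => (1 : ℝ)) | m]) ω := by
  have hCB : ∀ i, MeasurableSet[m₀] (C i ∩ B i) := fun i => (hm _ (hC i)).inter (hB i)
  have hCBd : Pairwise (Disjoint on fun i => C i ∩ B i) :=
    fun i j hij => (hBd hij).mono Set.inter_subset_right Set.inter_subset_right
  have hsum : ∑' i, ∫⁻ ω, ‖(C i ∩ B i).indicator (fun _ => (1 : ℝ)) ω‖ₑ ∂μ ≠ ⊤ := by
    simp_rw [enorm_indicator_eq_indicator_enorm, enorm_one, lintegral_indicator_const (hCB _),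
      one_mul]
    rw [← measure_iUnion hCBd hCB]
    exact measure_ne_top μ _
  have hterm : ∀ᵐ ω ∂μ, ∀ i, μ[(C i ∩ B i).indicator (fun _ => (1 : ℝ)) | m] ω =
      (C i).indicator (μ[(B i).indicator (fun _ => (1 : ℝ)) | m]) ω := by
    refine ae_all_iff.2 fun i => ?_
    rw [← Set.indicator_indicator]
    exact condExp_indicator ((integrable_const 1).indicator (hB i)) (hC i)
  simp_rw [funext (Set.indicator_iUnion_apply_eq_tsum hCBd _)]
  filter_upwards [condExp_tsum
    (fun i => (stronglyMeasurable_const.indicator (hCB i)).aestronglyMeasurable) hsum, hterm]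
    with ω hω hωi
  rw [hω]
  exact tsum_congr hωi

end ConditionalExpectation

section StickBreaking

variable {Ω 𝔛 : Type*} {X : ℕ → Ω → ℝ} {ω : Ω}

theorem sum_range_stick (N : ℕ) :
    ∑ j ∈ Finset.range N, stick X j ω = 1 - ∏ i ∈ Finset.range N, (1 - X i ω) := by
  induction N with
  | zero => simp
  | succ N ih => rw [Finset.sum_range_succ, Finset.prod_range_succ, ih, stick]; ring

variable (hX : ∀ j, X j ω ∈ Set.Icc (0 : ℝ) 1)
include hX

theorem stick_nonneg (j : ℕ) : 0 ≤ stick X j ω :=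
  mul_nonneg (hX j).1 (Finset.prod_nonneg fun i _ => sub_nonneg.2 (hX i).2)

theorem summable_stick : Summable fun j => stick X j ω :=
  summable_of_sum_range_le (c := 1) (stick_nonneg hX) fun N => by
    rw [sum_range_stick]
    linarith [Finset.prod_nonneg fun i (_ : i ∈ Finset.range N) => sub_nonneg.2 (hX i).2]

theorem hasSum_nuSB (T : ℕ → Ω → 𝔛) (A : Set 𝔛) :
    HasSum (fun j => stick X j ω * A.indicator (fun _ => (1 : ℝ)) (T j ω)) (nuSB X T A ω) := by
  refine (Summable.of_nonneg_of_le (fun j => ?_) (fun j => ?_) (summable_stick hX)).hasSum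
  · exact mul_nonneg (stick_nonneg hX j) (Set.indicator_nonneg (fun _ _ => zero_le_one) _)
  · exact mul_le_of_le_one_right (stick_nonneg hX j)
      (Set.indicator_le_self' (fun _ _ => zero_le_one) _)

theorem hasSum_prod_nuSB_singleton (T : ℕ → Ω → 𝔛) {n : ℕ} (y : Fin n → 𝔛) :
    HasSum (fun k : Fin n → ℕ =>
        {ω' | ∀ i, T (k i) ω' = y i}.indicator (fun ω' => ∏ i, stick X (k i) ω') ω)
      (∏ i, nuSB X T {y i} ω) := by
  convert hasSum_fin_prod_of_nonneg (fun i => hasSum_nuSB hX T {y i}) (fun i j =>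
    mul_nonneg (stick_nonneg hX j) (Set.indicator_nonneg (fun _ _ => zero_le_one) _)) using 2
    with k
  by_cases hk : ∀ i, T (k i) ω = y i
  · simp [Set.indicator_of_mem, hk]
  · obtain ⟨i, hi⟩ := not_forall.mp hk
    rw [Set.indicator_of_notMem (show ω ∉ {ω' | ∀ i, T (k i) ω' = y i} from hk)]
    exact (Finset.prod_eq_zero (Finset.mem_univ i) (by simp [hi])).symm

end StickBreaking

theorem ae_mem_Icc_of_map_eq_beta1 {Ω : Type*} [MeasurableSpace Ω] {Pr : Measure Ω} {Y : Ω → ℝ}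
    {θ : ℝ} (hY : Measurable Y) (hlaw : Measure.map Y Pr = beta1 θ) :
    ∀ᵐ ω ∂Pr, Y ω ∈ Set.Icc (0 : ℝ) 1 := by
  have hbeta : ∀ᵐ x ∂beta1 θ, x ∈ Set.Icc (0 : ℝ) 1 :=
    (withDensity_absolutelyContinuous _ _).ae_le (ae_restrict_mem measurableSet_Icc)
  rw [← hlaw] at hbeta
  exact ae_of_ae_map hY.aemeasurable hbeta

section SigmaAlgebras

variable {Ω 𝔛 : Type*} [MeasurableSpace 𝔛]

/-- `σ(P, T)` -/
abbrev sigmaStickChain (X : ℕ → Ω → ℝ) (T : ℕ → Ω → 𝔛) : MeasurableSpace Ω :=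
  MeasurableSpace.comap (fun ω => ((fun j => stick X j ω), (fun j => T j ω))) inferInstance

/-- `σ(ν, T₁)` -/
noncomputable abbrev sigmaNuStart (X : ℕ → Ω → ℝ) (T : ℕ → Ω → 𝔛) : MeasurableSpace Ω :=
  MeasurableSpace.comap (fun ω => ((fun z : 𝔛 => nuSB X T {z} ω), T 0 ω)) inferInstance

theorem sigmaStickChain_le [MeasurableSpace Ω] {X : ℕ → Ω → ℝ} {T : ℕ → Ω → 𝔛}
    (hX : ∀ j, Measurable (X j)) (hT : ∀ j, Measurable (T j)) :
    sigmaStickChain X T ≤ ‹MeasurableSpace Ω› := by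
  refine Measurable.comap_le
    ((measurable_pi_lambda _ fun j => ?_).prodMk (measurable_pi_lambda _ hT))
  exact (hX j).mul (Finset.measurable_prod _ fun i _ => measurable_const.sub (hX i))

theorem sigmaNuStart_le_sigmaStickChain [MeasurableSingletonClass 𝔛] (X : ℕ → Ω → ℝ)
    (T : ℕ → Ω → 𝔛) : sigmaNuStart X T ≤ sigmaStickChain X T := by
  have hν : Measurable fun p : (ℕ → ℝ) × (ℕ → 𝔛) =>
      ((fun z => ∑' j, p.1 j * ({z} : Set 𝔛).indicator (fun _ => (1 : ℝ)) (p.2 j)), p.2 0) := by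
    refine Measurable.prodMk (measurable_pi_lambda _ fun z => Measurable.tsum fun j => ?_)
      ((measurable_pi_apply 0).comp measurable_snd)
    exact ((measurable_pi_apply j).comp measurable_fst).mul
      ((measurable_const.indicator (measurableSet_singleton z)).comp
        ((measurable_pi_apply j).comp measurable_snd))
  exact (hν.comp
    (comap_measurable fun ω => ((fun j => stick X j ω), (fun j => T j ω)))).comap_le

theorem measurable_chain_sigmaStickChain (X : ℕ → Ω → ℝ) (T : ℕ → Ω → 𝔛) (j : ℕ) :
    Measurable[sigmaStickChain X T] (T j) :=
  (measurable_pi_apply j).comp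
    (measurable_snd.comp (comap_measurable fun ω => ((fun j => stick X j ω), (fun j => T j ω))))

theorem measurable_nuSB_sigmaNuStart (X : ℕ → Ω → ℝ) (T : ℕ → Ω → 𝔛) (z : 𝔛) :
    Measurable[sigmaNuStart X T] (nuSB X T {z}) :=
  (measurable_pi_apply z).comp
    (measurable_fst.comp (comap_measurable fun ω => ((fun z : 𝔛 => nuSB X T {z} ω), T 0 ω)))

end SigmaAlgebras

theorem condExp_sample_sigmaStickChain_ae_eq_prod_nuSB {Ω 𝔛 : Type*} [MeasurableSpace Ω]
    [MeasurableSpace 𝔛] [MeasurableSingletonClass 𝔛] {Pr : Measure Ω} [IsFiniteMeasure Pr]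
    {X : ℕ → Ω → ℝ} (hX : ∀ j, Measurable (X j)) (hX01 : ∀ᵐ ω ∂Pr, ∀ j, X j ω ∈ Set.Icc (0 : ℝ) 1)
    {T : ℕ → Ω → 𝔛} (hT : ∀ j, Measurable (T j)) {n : ℕ} {J : Fin n → Ω → ℕ}
    (hJmeas : ∀ i, Measurable (J i))
    (hJ : ∀ k : Fin n → ℕ, ∀ᵐ ω ∂Pr,
      Pr[{ω' | ∀ i, J i ω' = k i}.indicator (fun _ => (1 : ℝ)) | sigmaStickChain X T] ω =
        ∏ i, stick X (k i) ω)
    (y : Fin n → 𝔛) :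
    Pr[{ω' | ∀ i, T (J i ω') ω' = y i}.indicator (fun _ => (1 : ℝ)) | sigmaStickChain X T]
      =ᵐ[Pr] fun ω => ∏ i, nuSB X T {y i} ω := by
  set B : (Fin n → ℕ) → Set Ω := fun k => {ω | ∀ i, J i ω = k i}
  set C : (Fin n → ℕ) → Set Ω := fun k => {ω | ∀ i, T (k i) ω = y i}
  have hsample : {ω' | ∀ i, T (J i ω') ω' = y i} = ⋃ k, C k ∩ B k := by
    ext ω
    simp only [Set.mem_ofPred_eq, Set.mem_iUnion, Set.mem_inter_iff, C, B]
    refine ⟨fun h => ⟨fun i => J i ω, h, fun i => rfl⟩, ?_⟩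
    rintro ⟨k, hTk, hJk⟩ i
    rw [hJk i]
    exact hTk i
  have hB : ∀ k, MeasurableSet (B k) := fun k => by
    simp only [B, Set.ofPred_forall]
    exact MeasurableSet.iInter fun i => hJmeas i (measurableSet_singleton (k i))
  have hBd : Pairwise (Function.onFun Disjoint B) := fun k k' hkk' =>
    Set.disjoint_left.2 fun ω hk hk' => hkk' (funext fun i => (hk i).symm.trans (hk' i))
  have hC : ∀ k, MeasurableSet[sigmaStickChain X T] (C k) := fun k => by
    simp only [C, Set.ofPred_forall]
    exact MeasurableSet.iInter fun i =>
      measurable_chain_sigmaStickChain X T (k i) (measurableSet_singleton (y i))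
  rw [hsample]
  filter_upwards [condExp_indicator_iUnion_inter (sigmaStickChain_le hX hT) hB hBd hC,
    ae_all_iff.2 hJ, hX01] with ω hcond hJω hXω
  rw [hcond, ← (hasSum_prod_nuSB_singleton hXω T y).tsum_eq]
  refine tsum_congr fun k => ?_
  by_cases hk : ω ∈ C k
  · exact (Set.indicator_of_mem hk _).trans
      ((hJω k).trans (Set.indicator_of_mem hk (fun ω' => ∏ i, stick X (k i) ω')).symm)
  · exact (Set.indicator_of_notMem hk _).trans
      (Set.indicator_of_notMem hk (fun ω' => ∏ i, stick X (k i) ω')).symm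

theorem stmt2_general
    {𝔛 Ω : Type*} [Countable 𝔛] [MeasurableSpace 𝔛] [DiscreteMeasurableSpace 𝔛]
    [MeasurableSpace Ω] (Pr : Measure Ω) [IsProbabilityMeasure Pr]
    (θ : ℝ)
    -- the GEM(θ) ingredients: i.i.d. Beta(1,θ) variables X
    (X : ℕ → Ω → ℝ) (hXmeas : ∀ j, Measurable (X j))
    (hXlaw : ∀ j, Measure.map (X j) Pr = beta1 θ)
    -- the stationary Markov chain T with kernel Q and initial law μ
    (T : ℕ → Ω → 𝔛) (hTmeas : ∀ j, Measurable (T j))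
    -- the sampling indices J
    (n : ℕ) (J : Fin n → Ω → ℕ) (hJmeas : ∀ i, Measurable (J i))
    (hJ : ∀ jv : Fin n → ℕ, ∀ᵐ ω ∂Pr,
      (Pr[Set.indicator {ω' | ∀ i, J i ω' = jv i} (fun _ => (1:ℝ)) |
        MeasurableSpace.comap
          (fun ω => ((fun j => stick X j ω), (fun j => T j ω))) inferInstance]) ω
        = ∏ i, stick X (jv i) ω) :
    ∀ᵐ ω ∂Pr, ∀ y : Fin n → 𝔛,
      (Pr[Set.indicator {ω' | ∀ i, T (J i ω') ω' = y i} (fun _ => (1:ℝ)) |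
        MeasurableSpace.comap
          (fun ω => ((fun z : 𝔛 => nuSB X T {z} ω), T 0 ω)) inferInstance]) ω
        = ∏ i, nuSB X T {y i} ω := by
  have hX01 : ∀ᵐ ω ∂Pr, ∀ j, X j ω ∈ Set.Icc (0 : ℝ) 1 :=
    ae_all_iff.2 fun j => ae_mem_Icc_of_map_eq_beta1 (hXmeas j) (hXlaw j)
  have hprod_nu : ∀ y : Fin n → 𝔛,
      StronglyMeasurable[sigmaNuStart X T] fun ω => ∏ i, nuSB X T {y i} ω := fun y =>
    (Finset.measurable_prod _ fun i _ => measurable_nuSB_sigmaNuStart X T (y i)).stronglyMeasurable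
  exact ae_all_iff.2 fun y => condExp_ae_eq_of_condExp_ae_eq_of_le
    (sigmaNuStart_le_sigmaStickChain X T) (sigmaStickChain_le hXmeas hTmeas) (hprod_nu y)
    (condExp_sample_sigmaStickChain_ae_eq_prod_nuSB hXmeas hX01 hTmeas hJmeas hJ y)

/-- Proposition 3.3: given (ν, T₁), the variables Yᵢ = T_{Jᵢ} are i.i.d. with law ν. -/
theorem stmt2
    {𝔛 Ω : Type*} [Countable 𝔛] [DecidableEq 𝔛] [MeasurableSpace 𝔛] [DiscreteMeasurableSpace 𝔛]
    [MeasurableSpace Ω] (Pr : Measure Ω) [IsProbabilityMeasure Pr]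
    -- an irreducible positive recurrent generator G on 𝔛 with stationary distribution μ
    (G : 𝔛 → 𝔛 → ℝ) (θ : ℝ) (hθpos : 0 < θ) (hθG : ∀ x, |G x x| ≤ θ)
    (hGoff : ∀ x y, x ≠ y → 0 ≤ G x y)
    (hGrow : ∀ x, HasSum (fun y => if y = x then (0:ℝ) else G x y) (-G x x))
    (Q : 𝔛 → 𝔛 → ℝ) (hQdef : ∀ x y, Q x y = (if x = y then 1 else 0) + G x y / θ)
    (hirr : ∀ x y, ∃ m : ℕ, ∃ t : Fin (m + 2) → 𝔛, t 0 = x ∧ t (Fin.last (m + 1)) = y ∧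
      0 < ∏ i : Fin (m + 1), Q (t i.castSucc) (t i.succ))
    -- positive recurrence: Q admits a stationary probability distribution μ
    (μ : 𝔛 → ℝ) (hμ0 : ∀ x, 0 ≤ μ x) (hμ1 : HasSum μ 1)
    (hμQ : ∀ y, HasSum (fun x => μ x * Q x y) (μ y))
    -- the GEM(θ) ingredients: i.i.d. Beta(1,θ) variables X
    (X : ℕ → Ω → ℝ) (hXmeas : ∀ j, Measurable (X j))
    (hXiid : iIndepFun X Pr)
    (hXlaw : ∀ j, Measure.map (X j) Pr = beta1 θ)
    -- the stationary Markov chain T with kernel Q and initial law μ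
    (T : ℕ → Ω → 𝔛) (hTmeas : ∀ j, Measurable (T j))
    (hTlaw : ∀ (m : ℕ) (t : Fin (m + 1) → 𝔛),
      Pr {ω | ∀ i : Fin (m + 1), T i ω = t i} =
        ENNReal.ofReal (μ (t 0) * ∏ i : Fin m, Q (t i.castSucc) (t i.succ)))
    -- independence of the GEM sticks and the chain
    (hindep : IndepFun (fun ω j => X j ω) (fun ω j => T j ω) Pr)
    -- the sampling indices J
    (n : ℕ) (hn : 1 ≤ n) (J : Fin n → Ω → ℕ) (hJmeas : ∀ i, Measurable (J i))
    (hJ : ∀ jv : Fin n → ℕ, ∀ᵐ ω ∂Pr,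
      (Pr[Set.indicator {ω' | ∀ i, J i ω' = jv i} (fun _ => (1:ℝ)) |
        MeasurableSpace.comap
          (fun ω => ((fun j => stick X j ω), (fun j => T j ω))) inferInstance]) ω
        = ∏ i, stick X (jv i) ω) :
    ∀ᵐ ω ∂Pr, ∀ y : Fin n → 𝔛,
      (Pr[Set.indicator {ω' | ∀ i, T (J i ω') ω' = y i} (fun _ => (1:ℝ)) |
        MeasurableSpace.comap
          (fun ω => ((fun z : 𝔛 => nuSB X T {z} ω), T 0 ω)) inferInstance]) ω
        = ∏ i, nuSB X T {y i} ω :=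
  stmt2_general Pr θ X hXmeas hXlaw T hTmeas n J hJmeas hJ
end

section
/- Let 𝔛 be a finite set, Q a stochastic matrix on 𝔛, θ > 0, and G = θ(Q − I). Let m ≥ 1, let A₁,…,Aₙ be pairwise disjoint subsets of 𝔛, let k⃗ = (k₁,…,k_{n−1}) be a vector of nonnegative integers, and set k̃ = Σ_{j=1}^{n−1} kⱼ. Writing S(k⃗, l) := S((k₁,…,k_{n−1}, l)), the following matrix identity holds: θ D(Aₙ) Q Σ_{l=0}^{m−1} [Γ(θ+k̃+l)/Γ(k̃+l+1)] Σ_{σ∈S(k⃗,l)} ∏_{j=1}^{k̃+l} ((I − G/j)⁻¹ D(A_{σⱼ})) 1⃗ = [Γ(θ+k̃+m)/Γ(k̃+m)] D(Aₙ) Σ_{σ∈S(k⃗,m−1)} ∏_{j=1}^{k̃+m−1} ((I − G/j)⁻¹ D(A_{σⱼ})) 1⃗. -/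
open MeasureTheory ProbabilityTheory Matrix Filter

noncomputable section

/-- Generator matrix: nonnegative off-diagonal entries, rows summing to zero. -/
def IsGenerator {𝔛 : Type*} [Fintype 𝔛] [DecidableEq 𝔛] (G : Matrix 𝔛 𝔛 ℝ) : Prop :=
  (∀ x y, x ≠ y → 0 ≤ G x y) ∧ ∀ x, G x x = -∑ y ∈ Finset.univ.erase x, G x y

/-- Irreducibility of a square matrix: some power has positive (x,y) entry for all x,y. -/
def IrreducibleMat {𝔛 : Type*} [Fintype 𝔛] [DecidableEq 𝔛] (Q : Matrix 𝔛 𝔛 ℝ) : Prop :=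
  ∀ x y, ∃ m, 1 ≤ m ∧ 0 < (Q ^ m) x y

/-- Row-stochastic matrix. -/
def IsStochastic {𝔛 : Type*} [Fintype 𝔛] (Q : Matrix 𝔛 𝔛 ℝ) : Prop :=
  (∀ x y, 0 ≤ Q x y) ∧ ∀ x, ∑ y, Q x y = 1

-- D(A): diagonal 0-1 matrix of a set.
open scoped Classical in
def DMat {𝔛 : Type*} [Fintype 𝔛] [DecidableEq 𝔛] (A : Set 𝔛) : Matrix 𝔛 𝔛 ℝ :=
  Matrix.diagonal fun x => if x ∈ A then 1 else 0

/-- Reverse-ordered matrix product M_k ⋯ M_1 of M indexed by `Fin k` (0-based). -/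
def revProd {𝔛 : Type*} [Fintype 𝔛] [DecidableEq 𝔛] {k : ℕ} (M : Fin k → Matrix 𝔛 𝔛 ℝ) :
    Matrix 𝔛 𝔛 ℝ :=
  ((List.ofFn M).reverse).prod

-- The set S(k⃗) of sequences in `α^N` with exactly `kv a` entries equal to `a`.
open scoped Classical in
def SSeq {α : Type*} [Fintype α] [DecidableEq α] (kv : α → ℕ) (N : ℕ) :
    Finset (Fin N → α) :=
  Finset.univ.filter fun σ => ∀ a, (Finset.univ.filter fun i => σ i = a).card = kv a

end

/-!
Write `F(v, N) = ∑_{σ ∈ S(v)} ∏_{j ≤ N} (R_j D(A_{σⱼ})) 1⃗` with `R_j = (I - G/j)⁻¹`, which exists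
because `I - G/j` is strictly diagonally dominant. Splitting off the last letter of `σ` gives
`F(v, N) = ∑_a R_N D(A_a) F(v - e_a, N - 1)`, and the resolvent identity
`θ Q R_N = (N + θ) R_N - N I` turns this into
`θ D(Aₙ) Q F(v, N) = (N + θ) D(Aₙ) F(v, N) - N D(Aₙ) F(v - eₙ, N - 1)`,
all other letters being killed by the disjointness of the `Aᵢ`. For `v = (k⃗, l)`, `N = k̃ + l`
the Gamma weights `c_l` satisfy `c_l (k̃ + l + θ) = c_{l+1} (k̃ + l + 1)`, so the sum over `l`
telescopes to its last term.
-/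

section SSeq

lemma card_filter_snoc_eq {α : Type*} [DecidableEq α] {N : ℕ} (τ : Fin N → α) (a b : α) :
    (Finset.univ.filter fun i : Fin (N + 1) => (Fin.snoc τ a : Fin (N + 1) → α) i = b).card
      = (Finset.univ.filter fun i : Fin N => τ i = b).card + if a = b then 1 else 0 := by
  rw [Finset.card_filter, Finset.card_filter, Fin.sum_univ_castSucc]
  simp

variable {α : Type*} [Fintype α] [DecidableEq α]

lemma mem_SSeq {kv : α → ℕ} {N : ℕ} {σ : Fin N → α} :
    σ ∈ SSeq kv N ↔ ∀ a, (Finset.univ.filter fun i => σ i = a).card = kv a := by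
  simp [SSeq]

lemma snoc_mem_SSeq_iff {kv : α → ℕ} {N : ℕ} {τ : Fin N → α} {a : α} :
    (Fin.snoc τ a : Fin (N + 1) → α) ∈ SSeq kv (N + 1) ↔
      1 ≤ kv a ∧ τ ∈ SSeq (Function.update kv a (kv a - 1)) N := by
  simp only [mem_SSeq, card_filter_snoc_eq]
  constructor
  · intro h
    have ha := h a
    rw [if_pos rfl] at ha
    refine ⟨by omega, fun b => ?_⟩
    rcases eq_or_ne b a with rfl | hb
    · rw [Function.update_self]; omega
    · simpa [hb, Ne.symm hb] using h b
  · rintro ⟨ha, h⟩ b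
    rcases eq_or_ne b a with rfl | hb
    · have hb := h b
      rw [Function.update_self] at hb
      rw [if_pos rfl]; omega
    · simpa [hb, Ne.symm hb] using h b

lemma sum_SSeq_succ {β : Type*} [AddCommMonoid β] (kv : α → ℕ) (N : ℕ)
    (f : (Fin (N + 1) → α) → β) :
    ∑ σ ∈ SSeq kv (N + 1), f σ =
      ∑ a ∈ Finset.univ.filter (fun a => 1 ≤ kv a),
        ∑ τ ∈ SSeq (Function.update kv a (kv a - 1)) N, f (Fin.snoc τ a) := by
  rw [← Fintype.sum_ite_mem, ← (Fin.snocEquiv fun _ => α).sum_comp, Fintype.sum_prod_type,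
    Finset.sum_filter]
  refine Fintype.sum_congr _ _ fun a => ?_
  have hsnoc : ∀ τ : Fin N → α, (Fin.snocEquiv fun _ => α) (a, τ) = Fin.snoc τ a :=
    fun _ => rfl
  simp only [hsnoc, snoc_mem_SSeq_iff, ite_and]
  split_ifs <;> simp

end SSeq

section Matrices

variable {𝔛 : Type*} [Fintype 𝔛]

lemma DMat_mul_DMat [DecidableEq 𝔛] (A B : Set 𝔛) : DMat A * DMat B = DMat (A ∩ B) := by
  simp only [DMat, diagonal_mul_diagonal]
  congr 1
  funext x
  by_cases hA : x ∈ A <;> by_cases hB : x ∈ B <;> simp [hA, hB]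

lemma DMat_empty [DecidableEq 𝔛] : DMat (∅ : Set 𝔛) = 0 := by
  simp [DMat]

lemma DMat_mulVec_sum_DMat_mulVec [DecidableEq 𝔛] {α : Type*} [DecidableEq α] {A : α → Set 𝔛}
    {a : α} (hA : ∀ b, b ≠ a → Disjoint (A a) (A b)) (s : Finset α) (x : α → 𝔛 → ℝ) :
    DMat (A a) *ᵥ ∑ b ∈ s, DMat (A b) *ᵥ x b = if a ∈ s then DMat (A a) *ᵥ x a else 0 := by
  have hproj b : DMat (A a) *ᵥ (DMat (A b) *ᵥ x b) = if a = b then DMat (A a) *ᵥ x a else 0 := by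
    rw [mulVec_mulVec, DMat_mul_DMat]
    rcases eq_or_ne a b with rfl | hb
    · rw [Set.inter_self, if_pos rfl]
    · rw [(hA b hb.symm).inter_eq, DMat_empty, zero_mulVec, if_neg hb]
  rw [mulVec_sum, Finset.sum_congr rfl fun b _ => hproj b, Finset.sum_ite_eq]

lemma IsStochastic.mulVec_const {Q : Matrix 𝔛 𝔛 ℝ} (hQ : IsStochastic Q) (c : ℝ) :
    Q *ᵥ (fun _ => c) = fun _ => c := by
  funext x
  simp [mulVec, dotProduct, ← Finset.sum_mul, hQ.2 x]

lemma IsStochastic.isGenerator [DecidableEq 𝔛] {Q : Matrix 𝔛 𝔛 ℝ} (hQ : IsStochastic Q)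
    {θ : ℝ} (hθ : 0 ≤ θ) : IsGenerator (θ • (Q - 1)) := by
  refine ⟨fun x y hxy => ?_, fun x => ?_⟩
  · simpa [one_apply_ne hxy] using mul_nonneg hθ (hQ.1 x y)
  · have hoff : ∀ y ∈ Finset.univ.erase x, (θ • (Q - 1)) x y = θ * Q x y := fun y hy => by
      simp [one_apply_ne (Finset.ne_of_mem_erase hy).symm]
    rw [Finset.sum_congr rfl hoff, ← Finset.mul_sum,
      Finset.sum_erase_eq_sub (Finset.mem_univ x), hQ.2 x]
    simp only [Matrix.smul_apply, Matrix.sub_apply, one_apply_eq, smul_eq_mul]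
    ring

lemma IsGenerator.det_one_sub_smul_ne_zero [DecidableEq 𝔛] {G : Matrix 𝔛 𝔛 ℝ}
    (hG : IsGenerator G) {t : ℝ} (ht : 0 ≤ t) : (1 - t • G).det ≠ 0 := by
  refine det_ne_zero_of_sum_row_lt_diag fun k => ?_
  have hoff : ∀ l ∈ Finset.univ.erase k, ‖(1 - t • G) k l‖ = t * G k l := fun l hl => by
    have hlk := (Finset.ne_of_mem_erase hl).symm
    simp [one_apply_ne hlk, abs_of_nonneg ht, abs_of_nonneg (hG.1 k l hlk)]
  have hrow : 0 ≤ ∑ l ∈ Finset.univ.erase k, G k l :=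
    Finset.sum_nonneg fun l hl => hG.1 k l (Finset.ne_of_mem_erase hl).symm
  rw [Finset.sum_congr rfl hoff, ← Finset.mul_sum, Matrix.sub_apply, one_apply_eq,
    Matrix.smul_apply, hG.2 k, smul_eq_mul, Real.norm_eq_abs, abs_of_nonneg (by nlinarith)]
  nlinarith

lemma mul_inv_one_sub_inv_smul [DecidableEq 𝔛] {G : Matrix 𝔛 𝔛 ℝ} {c : ℝ} (hc : c ≠ 0)
    (hdet : IsUnit (1 - c⁻¹ • G).det) :
    G * (1 - c⁻¹ • G)⁻¹ = c • ((1 - c⁻¹ • G)⁻¹ - 1) := by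
  set R := (1 - c⁻¹ • G)⁻¹
  have hR : R - c⁻¹ • (G * R) = 1 := by
    simpa [sub_mul, smul_mul_assoc] using mul_nonsing_inv _ hdet
  rw [← hR, sub_sub_cancel, smul_smul, mul_inv_cancel₀ hc, one_smul]

end Matrices

section SeqProdSum

variable {𝔛 α : Type*} [Fintype 𝔛] [DecidableEq 𝔛] [Fintype α] [DecidableEq α]

lemma revProd_succ {N : ℕ} (M : Fin (N + 1) → Matrix 𝔛 𝔛 ℝ) :
    revProd M = M (Fin.last N) * revProd fun i : Fin N => M i.castSucc := by
  rw [revProd, revProd, List.ofFn_succ', List.concat_eq_append, List.reverse_append]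
  simp

def seqProdSum (R : ℕ → Matrix 𝔛 𝔛 ℝ) (D : α → Matrix 𝔛 𝔛 ℝ) (v : α → ℕ) (N : ℕ) : 𝔛 → ℝ :=
  ∑ σ ∈ SSeq v N, (revProd fun i : Fin N => R (i + 1) * D (σ i)) *ᵥ fun _ => 1

lemma seqProdSum_zero (R : ℕ → Matrix 𝔛 𝔛 ℝ) (D : α → Matrix 𝔛 𝔛 ℝ) (v : α → ℕ) :
    seqProdSum R D v 0 = fun _ => ((SSeq v 0).card : ℝ) := by
  funext x
  simp [seqProdSum, revProd]

lemma seqProdSum_succ (R : ℕ → Matrix 𝔛 𝔛 ℝ) (D : α → Matrix 𝔛 𝔛 ℝ) (v : α → ℕ) (N : ℕ) :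
    seqProdSum R D v (N + 1) = ∑ a ∈ Finset.univ.filter (fun a => 1 ≤ v a),
      (R (N + 1) * D a) *ᵥ seqProdSum R D (Function.update v a (v a - 1)) N := by
  rw [seqProdSum, sum_SSeq_succ]
  refine Finset.sum_congr rfl fun a _ => ?_
  rw [seqProdSum, mulVec_sum]
  refine Finset.sum_congr rfl fun τ _ => ?_
  rw [revProd_succ, ← mulVec_mulVec]
  simp

end SeqProdSum

section Recursion

variable {𝔛 α : Type*} [Fintype 𝔛] [DecidableEq 𝔛] [Fintype α] [DecidableEq α]

noncomputable def stepResolvent (G : Matrix 𝔛 𝔛 ℝ) (j : ℕ) : Matrix 𝔛 𝔛 ℝ :=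
  (1 - (j : ℝ)⁻¹ • G)⁻¹

lemma IsStochastic.smul_mul_stepResolvent {Q : Matrix 𝔛 𝔛 ℝ} (hQ : IsStochastic Q) {θ : ℝ}
    (hθ : 0 ≤ θ) {j : ℕ} (hj : j ≠ 0) :
    θ • (Q * stepResolvent (θ • (Q - 1)) j)
      = ((j : ℝ) + θ) • stepResolvent (θ • (Q - 1)) j - (j : ℝ) • 1 := by
  have hj' : (j : ℝ) ≠ 0 := Nat.cast_ne_zero.2 hj
  have hdet : IsUnit (1 - (j : ℝ)⁻¹ • θ • (Q - 1)).det :=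
    isUnit_iff_ne_zero.2 ((hQ.isGenerator hθ).det_one_sub_smul_ne_zero (by positivity))
  have hG := mul_inv_one_sub_inv_smul hj' hdet
  unfold stepResolvent
  set R := (1 - (j : ℝ)⁻¹ • θ • (Q - 1))⁻¹
  calc θ • (Q * R) = θ • (Q - 1) * R + θ • R := by
        rw [smul_mul_assoc, sub_mul, one_mul, smul_sub, sub_add_cancel]
    _ = _ := by rw [hG]; module

lemma IsStochastic.smul_mulVec_seqProdSum_succ {Q : Matrix 𝔛 𝔛 ℝ} (hQ : IsStochastic Q)
    {θ : ℝ} (hθ : 0 ≤ θ) (D : α → Matrix 𝔛 𝔛 ℝ) (v : α → ℕ) (N : ℕ) :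
    θ • (Q *ᵥ seqProdSum (stepResolvent (θ • (Q - 1))) D v (N + 1))
      = (((N + 1 : ℕ) : ℝ) + θ) • seqProdSum (stepResolvent (θ • (Q - 1))) D v (N + 1)
        - ((N + 1 : ℕ) : ℝ) • ∑ a ∈ Finset.univ.filter (fun a => 1 ≤ v a),
          D a *ᵥ seqProdSum (stepResolvent (θ • (Q - 1))) D (Function.update v a (v a - 1)) N := by
  simp only [seqProdSum_succ, mulVec_sum, Finset.smul_sum, ← Finset.sum_sub_distrib]
  refine Finset.sum_congr rfl fun a _ => ?_
  rw [mulVec_mulVec, ← smul_mulVec, ← mul_assoc, ← smul_mul_assoc,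
    hQ.smul_mul_stepResolvent hθ N.succ_ne_zero, sub_mul, smul_mul_assoc, smul_mul_assoc, one_mul,
    sub_mulVec, smul_mulVec, smul_mulVec, ← mulVec_mulVec]

lemma IsStochastic.smul_DMat_mul_mulVec_seqProdSum {Q : Matrix 𝔛 𝔛 ℝ} (hQ : IsStochastic Q)
    {θ : ℝ} (hθ : 0 ≤ θ) {A : α → Set 𝔛} {a : α} (hA : ∀ b, b ≠ a → Disjoint (A a) (A b))
    (v : α → ℕ) (N : ℕ) :
    θ • ((DMat (A a) * Q) *ᵥ seqProdSum (stepResolvent (θ • (Q - 1))) (DMat ∘ A) v N)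
      = ((N : ℝ) + θ) • (DMat (A a) *ᵥ seqProdSum (stepResolvent (θ • (Q - 1))) (DMat ∘ A) v N)
        - (N : ℝ) • if 1 ≤ v a then
            DMat (A a) *ᵥ seqProdSum (stepResolvent (θ • (Q - 1))) (DMat ∘ A)
              (Function.update v a (v a - 1)) (N - 1)
          else 0 := by
  rw [← mulVec_mulVec, ← mulVec_smul]
  cases N with
  | zero => simp [seqProdSum_zero, hQ.mulVec_const, mulVec_smul]
  | succ N =>
    rw [hQ.smul_mulVec_seqProdSum_succ hθ, mulVec_sub, mulVec_smul, mulVec_smul]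
    simp only [Function.comp_apply]
    rw [DMat_mulVec_sum_DMat_mulVec hA]
    simp

end Recursion

lemma sum_range_smul_telescope {R V : Type*} [Ring R] [AddCommGroup V] [Module R V]
    (a b c : ℕ → R) (X Y : ℕ → V) (h0 : Y 0 = a 0 • X 0)
    (hsucc : ∀ l, Y (l + 1) = a (l + 1) • X (l + 1) - b (l + 1) • X l)
    (hc : ∀ l, c l * a l = c (l + 1) * b (l + 1)) (m : ℕ) :
    ∑ l ∈ Finset.range (m + 1), c l • Y l = (c m * a m) • X m := by
  induction m with
  | zero => simp [h0, smul_smul]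
  | succ m ih =>
    rw [Finset.sum_range_succ, ih, hsucc, hc, smul_sub, smul_smul, smul_smul]
    abel

lemma Real.Gamma_div_Gamma_mul_self {s u : ℝ} (hs : s ≠ 0) (hu : u ≠ 0) :
    Real.Gamma s / Real.Gamma u * s = Real.Gamma (s + 1) / Real.Gamma (u + 1) * u := by
  rw [Real.Gamma_add_one hs, Real.Gamma_add_one hu, mul_comm u, ← div_div, div_mul_cancel₀ _ hu]
  ring

/-- Lemma 5.2: the key summation identity. -/
theorem stmt10
    {𝔛 : Type*} [Fintype 𝔛] [DecidableEq 𝔛]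
    (Q : Matrix 𝔛 𝔛 ℝ) (hQ : IsStochastic Q) (θ : ℝ) (hθ : 0 < θ)
    (G : Matrix 𝔛 𝔛 ℝ) (hG : G = θ • (Q - 1))
    (m' n' : ℕ) (A : Fin (n' + 1) → Set 𝔛) (hdisj : ∀ i j, i ≠ j → Disjoint (A i) (A j))
    (kvec : Fin n' → ℕ) :
    θ • ((DMat (A (Fin.last n')) * Q).mulVec
        (∑ l ∈ Finset.range (m' + 1),
          (Real.Gamma (θ + (∑ j, kvec j) + l) / Real.Gamma ((∑ j, kvec j) + l + 1)) •
            ∑ σ ∈ SSeq (Fin.snoc kvec l) ((∑ j, kvec j) + l),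
              (revProd fun i : Fin ((∑ j, kvec j) + l) =>
                  (1 - (((i : ℕ) + 1 : ℕ) : ℝ)⁻¹ • G)⁻¹ * DMat (A (σ i))).mulVec
                (fun _ => (1:ℝ))))
      = (Real.Gamma (θ + (∑ j, kvec j) + m' + 1) / Real.Gamma ((∑ j, kvec j) + m' + 1)) •
          ((DMat (A (Fin.last n'))).mulVec
            (∑ σ ∈ SSeq (Fin.snoc kvec m') ((∑ j, kvec j) + m'),
              (revProd fun i : Fin ((∑ j, kvec j) + m') =>
                  (1 - (((i : ℕ) + 1 : ℕ) : ℝ)⁻¹ • G)⁻¹ * DMat (A (σ i))).mulVec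
                (fun _ => (1:ℝ)))) := by
  subst hG
  set K := ∑ j, kvec j
  let X l := DMat (A (Fin.last n')) *ᵥ
    seqProdSum (stepResolvent (θ • (Q - 1))) (DMat ∘ A) (Fin.snoc kvec l) (K + l)
  have hrec l := hQ.smul_DMat_mul_mulVec_seqProdSum hθ.le (a := Fin.last n')
    (fun b hb => hdisj _ _ hb.symm) (Fin.snoc kvec l) (K + l)
  simp only [Fin.snoc_last, Fin.update_snoc_last] at hrec
  show θ • ((DMat (A (Fin.last n')) * Q) *ᵥ ∑ l ∈ Finset.range (m' + 1),
      (Real.Gamma (θ + K + l) / Real.Gamma (K + l + 1)) •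
        seqProdSum (stepResolvent (θ • (Q - 1))) (DMat ∘ A) (Fin.snoc kvec l) (K + l))
    = _ • X m'
  simp only [mulVec_sum, mulVec_smul, Finset.smul_sum, smul_comm θ]
  rw [sum_range_smul_telescope (fun l => ((K + l : ℕ) : ℝ) + θ) (fun l => ((K + l : ℕ) : ℝ)) _ X]
  · rw [Nat.cast_add, Real.Gamma_add_one (s := θ + K + m') (by positivity)]
    congr 1
    ring
  · simpa [X] using hrec 0
  · intro l
    simpa [X, ← add_assoc] using hrec (l + 1)
  · intro l
    simp only [Nat.cast_add, Nat.cast_one, ← add_assoc]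
    rw [show (K : ℝ) + l + θ = θ + K + l by ring,
      Real.Gamma_div_Gamma_mul_self (u := K + l + 1) (by positivity) (by positivity)]
end

section
/- Let 𝔛 be a finite set, Q a stochastic matrix on 𝔛, θ > 0, G = θ(Q − I), and A ⊆ 𝔛. Then for every integer k ≥ 1 the following matrix identity holds: D(A) Q Σ_{j=0}^{k−1} (Γ(θ+j)/Γ(j+1)) ∏_{i=1}^{j} ((I − G/i)⁻¹ D(A)) 1⃗ = (Γ(θ+k)/(θ Γ(k))) D(A) ∏_{i=1}^{k−1} ((I − G/i)⁻¹ D(A)) 1⃗. -/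
open MeasureTheory ProbabilityTheory Matrix Filter

section Helpers
variable {𝔛 : Type*} [Fintype 𝔛] [DecidableEq 𝔛]

lemma stmt14_revProd_succ {k : ℕ} (M : Fin (k+1) → Matrix 𝔛 𝔛 ℝ) :
    revProd M = M (Fin.last k) * revProd (fun i => M i.castSucc) := by
  unfold revProd
  rw [List.ofFn_succ', List.concat_eq_append, List.reverse_append]
  simp

lemma stmt14_DD (A : Set 𝔛) : DMat A * DMat A = DMat A := by
  classical
  have h : ((fun x => if x ∈ A then (1:ℝ) else 0) * fun x => if x ∈ A then (1:ℝ) else 0)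
      = fun x => if x ∈ A then (1:ℝ) else 0 := by
    funext x; by_cases h : x ∈ A <;> simp [h]
  simp only [DMat, Matrix.diagonal_mul_diagonal]
  exact congrArg _ (funext fun x => by by_cases hx : x ∈ A <;> simp [hx])

lemma stmt14_Q1 (Q : Matrix 𝔛 𝔛 ℝ) (hQ : IsStochastic Q) :
    Q *ᵥ (fun _ => (1:ℝ)) = fun _ => (1:ℝ) := by
  funext x
  simp [Matrix.mulVec, dotProduct, hQ.2 x]

lemma stmt14_det (Q : Matrix 𝔛 𝔛 ℝ) (hQ : IsStochastic Q) (c : ℝ) (hc : 0 < c) :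
    IsUnit ((1 : Matrix 𝔛 𝔛 ℝ) - c • (Q - 1)).det := by
  rw [isUnit_iff_ne_zero]
  intro hdet
  obtain ⟨v, hv0, hv⟩ := Matrix.exists_mulVec_eq_zero_iff.mpr hdet
  obtain ⟨x0, hx0'⟩ := Function.ne_iff.mp hv0
  have hx0 : v x0 ≠ 0 := by simpa using hx0'
  obtain ⟨x, -, hmax⟩ := Finset.exists_max_image Finset.univ (fun y => |v y|)
    ⟨x0, Finset.mem_univ x0⟩
  have hvx : 0 < |v x| := lt_of_lt_of_le (abs_pos.mpr hx0) (hmax x0 (Finset.mem_univ x0))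
  rw [Matrix.sub_mulVec, Matrix.one_mulVec, Matrix.smul_mulVec, Matrix.sub_mulVec,
    Matrix.one_mulVec] at hv
  have h1 : (1 + c) * v x = c * ∑ y, Q x y * v y := by
    have h := congrFun hv x
    simp only [Pi.sub_apply, Pi.smul_apply, smul_eq_mul, Pi.zero_apply, Matrix.mulVec,
      dotProduct] at h
    ring_nf at h ⊢
    linarith
  have h2 : (1 + c) * |v x| ≤ c * |v x| := by
    calc (1 + c) * |v x| = |(1 + c) * v x| := by
          rw [abs_mul, abs_of_pos (show (0:ℝ) < 1 + c by linarith)]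
      _ = |c * ∑ y, Q x y * v y| := by rw [h1]
      _ = c * |∑ y, Q x y * v y| := by rw [abs_mul, abs_of_pos hc]
      _ ≤ c * ∑ y, |Q x y * v y| :=
          mul_le_mul_of_nonneg_left (Finset.abs_sum_le_sum_abs _ _) hc.le
      _ ≤ c * ∑ y, Q x y * |v x| := by
          apply mul_le_mul_of_nonneg_left _ hc.le
          apply Finset.sum_le_sum
          intro y _
          rw [abs_mul, abs_of_nonneg (hQ.1 x y)]
          exact mul_le_mul_of_nonneg_left (hmax y (Finset.mem_univ y)) (hQ.1 x y)
      _ = c * |v x| := by rw [← Finset.sum_mul, hQ.2 x, one_mul]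
  nlinarith

end Helpers

/-- The claim u_k = w_k in the proof of Proposition 5.1. -/
theorem stmt14
    {𝔛 : Type*} [Fintype 𝔛] [DecidableEq 𝔛]
    (Q : Matrix 𝔛 𝔛 ℝ) (hQ : IsStochastic Q) (θ : ℝ) (hθ : 0 < θ)
    (G : Matrix 𝔛 𝔛 ℝ) (hG : G = θ • (Q - 1)) (A : Set 𝔛) (k' : ℕ) :
    (DMat A * Q).mulVec
        (∑ j ∈ Finset.range (k' + 1), (Real.Gamma (θ + j) / Real.Gamma (j + 1)) •
          (revProd fun i : Fin j =>
              (1 - (((i : ℕ) + 1 : ℕ) : ℝ)⁻¹ • G)⁻¹ * DMat A).mulVec (fun _ => (1:ℝ)))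
      = (Real.Gamma (θ + k' + 1) / (θ * Real.Gamma (k' + 1))) •
          (DMat A).mulVec
            ((revProd fun i : Fin k' =>
                (1 - (((i : ℕ) + 1 : ℕ) : ℝ)⁻¹ • G)⁻¹ * DMat A).mulVec (fun _ => (1:ℝ))) := by
  subst hG
  induction k' with
  | zero =>
    rw [Finset.sum_range_one]
    have h0 : (revProd fun i : Fin 0 =>
        (1 - (((i : ℕ) + 1 : ℕ) : ℝ)⁻¹ • θ • (Q - 1))⁻¹ * DMat A) = (1 : Matrix 𝔛 𝔛 ℝ) := by
      simp [revProd]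
    rw [h0, Matrix.one_mulVec, Matrix.mulVec_smul, ← Matrix.mulVec_mulVec, stmt14_Q1 Q hQ]
    congr 1
    push_cast
    rw [add_zero, zero_add, Real.Gamma_one, Real.Gamma_add_one hθ.ne']
    field_simp
  | succ k ih =>
    rw [Finset.sum_range_succ, Matrix.mulVec_add, Matrix.mulVec_smul, ih]
    -- notation
    set D := DMat A with hD
    set B : Matrix 𝔛 𝔛 ℝ := 1 - (((k:ℝ)+1)⁻¹ * θ) • (Q - 1) with hB
    set c : ℝ := ((k:ℝ)+1)⁻¹ * θ with hc
    set Pk : Matrix 𝔛 𝔛 ℝ :=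
      revProd (fun i : Fin k => (1 - (((i : ℕ) + 1 : ℕ) : ℝ)⁻¹ • θ • (Q - 1))⁻¹ * D) with hPk
    have hsplit : (revProd fun i : Fin (k+1) =>
        (1 - (((i : ℕ) + 1 : ℕ) : ℝ)⁻¹ • θ • (Q - 1))⁻¹ * D) = (B⁻¹ * D) * Pk := by
      rw [stmt14_revProd_succ]
      congr 2
      · rw [hB, smul_smul, Fin.val_last]
        push_cast
        rfl
    rw [hsplit]
    set one : 𝔛 → ℝ := fun _ => (1:ℝ) with hone
    set u : 𝔛 → ℝ := Pk *ᵥ one with hu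
    set w : 𝔛 → ℝ := ((B⁻¹ * D) * Pk) *ᵥ one with hw
    have hcpos : (0:ℝ) < c := by
      rw [hc]; positivity
    have h1c : (1:ℝ) + c ≠ 0 := by positivity
    have hDD : D * D = D := stmt14_DD A
    have hBdet : IsUnit B.det := stmt14_det Q hQ c hcpos
    have hBB : B * B⁻¹ = 1 := Matrix.mul_nonsing_inv _ hBdet
    have hBw : B *ᵥ w = D *ᵥ u := by
      rw [hw, Matrix.mulVec_mulVec, ← mul_assoc, ← mul_assoc, hBB, one_mul, hu,
        Matrix.mulVec_mulVec]
    have hwB : (1 + c) • w = B *ᵥ w + c • (Q *ᵥ w) := by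
      rw [hB, Matrix.sub_mulVec, Matrix.one_mulVec, Matrix.smul_mulVec,
        Matrix.sub_mulVec, Matrix.one_mulVec]
      module
    have hDw : D *ᵥ w = (1 + c)⁻¹ • (D *ᵥ u + c • ((D * Q) *ᵥ w)) := by
      have hwid : w = (1 + c)⁻¹ • (B *ᵥ w + c • (Q *ᵥ w)) := by
        rw [← hwB, inv_smul_smul₀ h1c]
      conv_lhs => rw [hwid]
      rw [Matrix.mulVec_smul, Matrix.mulVec_add, Matrix.mulVec_smul, hBw,
        Matrix.mulVec_mulVec, hDD, Matrix.mulVec_mulVec, Matrix.mulVec_mulVec]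
    rw [hDw, smul_smul, smul_add, smul_smul]
    have g1 : Real.Gamma ((k:ℝ) + 1) ≠ 0 := (Real.Gamma_pos_of_pos (by positivity)).ne'
    have g2 : Real.Gamma (θ + (k:ℝ) + 1) ≠ 0 := (Real.Gamma_pos_of_pos (by positivity)).ne'
    have hk1 : ((k:ℝ) + 1) ≠ 0 := by positivity
    congr 1
    · congr 1
      push_cast
      rw [show θ + ((k:ℝ) + 1) = θ + (k:ℝ) + 1 by ring,
        Real.Gamma_add_one (by positivity : θ + (k:ℝ) + 1 ≠ 0),
        Real.Gamma_add_one hk1, hc]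
      field_simp
      ring
    · congr 1
      push_cast
      rw [show θ + ((k:ℝ) + 1) = θ + (k:ℝ) + 1 by ring,
        Real.Gamma_add_one (by positivity : θ + (k:ℝ) + 1 ≠ 0),
        Real.Gamma_add_one hk1, hc]
      field_simp
      ring
end

section
/- Let 𝔛 be a finite set and Q an irreducible aperiodic stochastic matrix on 𝔛 with stationary distribution μ. For θ > 0 set G^θ = θ(Q − I). Then I − G^θ is invertible for every θ > 0, and for every x ∈ 𝔛, lim_{θ→∞} (I − G^θ)⁻¹_{xx} = μ_x. -/
open MeasureTheory ProbabilityTheory Matrix Filter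

namespace Stmt16Aux

variable {𝔛 : Type*} [Fintype 𝔛] [DecidableEq 𝔛]

lemma stoch_pow {Q : Matrix 𝔛 𝔛 ℝ} (hQ : IsStochastic Q) (m : ℕ) : IsStochastic (Q ^ m) := by
  induction m with
  | zero =>
    refine ⟨fun x y => ?_, fun x => ?_⟩
    · simp only [pow_zero, Matrix.one_apply]; positivity
    · simp [pow_zero, Matrix.one_apply]
  | succ n ih =>
    rw [pow_succ]
    refine ⟨fun x y => ?_, fun x => ?_⟩
    · rw [Matrix.mul_apply]
      exact Finset.sum_nonneg fun k _ => mul_nonneg (ih.1 x k) (hQ.1 k y)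
    · simp only [Matrix.mul_apply]
      rw [Finset.sum_comm]
      calc ∑ k, ∑ y, (Q ^ n) x k * Q k y
          = ∑ k, (Q ^ n) x k * ∑ y, Q k y := by simp [Finset.mul_sum]
        _ = 1 := by simp only [hQ.2, mul_one]; exact ih.2 x

lemma harmonic_const {Q : Matrix 𝔛 𝔛 ℝ} (hQ : IsStochastic Q) (hirr : IrreducibleMat Q)
    {h : 𝔛 → ℝ} (hh : Q.mulVec h = h) (x y : 𝔛) : h x = h y := by
  have hpow : ∀ m, (Q ^ m).mulVec h = h := by
    intro m
    induction m with
    | zero => simp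
    | succ n ih => rw [pow_succ, ← Matrix.mulVec_mulVec, hh, ih]
  haveI : Nonempty 𝔛 := ⟨x⟩
  obtain ⟨x₀, -, hx₀⟩ := Finset.exists_max_image Finset.univ h ⟨x, Finset.mem_univ x⟩
  suffices hkey : ∀ z, h z = h x₀ by rw [hkey x, hkey y]
  intro z
  obtain ⟨m, hm1, hmpos⟩ := hirr x₀ z
  have hst := stoch_pow hQ m
  have hsum : ∑ w, (Q ^ m) x₀ w * (h x₀ - h w) = 0 := by
    have h1 : ∑ w, (Q ^ m) x₀ w * h w = h x₀ := by
      have := congrFun (hpow m) x₀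
      simpa [Matrix.mulVec, dotProduct] using this
    simp only [mul_sub, Finset.sum_sub_distrib, h1, ← Finset.sum_mul, hst.2 x₀, one_mul, sub_self]
  have hterm : ∀ w ∈ Finset.univ, (0:ℝ) ≤ (Q ^ m) x₀ w * (h x₀ - h w) := by
    intro w _
    exact mul_nonneg (hst.1 x₀ w) (sub_nonneg.mpr (hx₀ w (Finset.mem_univ w)))
  have := (Finset.sum_eq_zero_iff_of_nonneg hterm).mp hsum z (Finset.mem_univ z)
  rcases mul_eq_zero.mp this with h0 | h0
  · exact absurd h0 (ne_of_gt hmpos)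
  · linarith [sub_eq_zero.mp h0]

lemma mulVec_resolvent {Q : Matrix 𝔛 𝔛 ℝ} (θ : ℝ) (v : 𝔛 → ℝ) (z : 𝔛) :
    (1 - θ • (Q - 1)).mulVec v z = (1 + θ) * v z - θ * Q.mulVec v z := by
  simp only [Matrix.sub_mulVec, Matrix.smul_mulVec, Matrix.one_mulVec,
    Pi.sub_apply, Pi.smul_apply, smul_eq_mul]
  ring

lemma resolvent_bound {Q : Matrix 𝔛 𝔛 ℝ} (hQ : IsStochastic Q) {θ : ℝ} (hθ : 0 < θ)
    {v w : 𝔛 → ℝ} (hvw : (1 - θ • (Q - 1)).mulVec v = w) : ‖v‖ ≤ ‖w‖ := by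
  rcases isEmpty_or_nonempty 𝔛 with hE | hN
  · have : v = 0 := funext fun z => isEmptyElim z
    simp [this]
  obtain ⟨x₀, -, hx₀⟩ := Finset.exists_max_image Finset.univ (fun z => |v z|)
    ⟨Classical.arbitrary 𝔛, Finset.mem_univ _⟩
  have hQv : |Q.mulVec v x₀| ≤ |v x₀| := by
    calc |Q.mulVec v x₀| = |∑ y, Q x₀ y * v y| := by
          simp [Matrix.mulVec, dotProduct]
      _ ≤ ∑ y, |Q x₀ y * v y| := Finset.abs_sum_le_sum_abs _ _
      _ ≤ ∑ y, Q x₀ y * |v x₀| := by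
          refine Finset.sum_le_sum fun y _ => ?_
          rw [abs_mul, abs_of_nonneg (hQ.1 x₀ y)]
          exact mul_le_mul_of_nonneg_left (hx₀ y (Finset.mem_univ y)) (hQ.1 x₀ y)
      _ = |v x₀| := by rw [← Finset.sum_mul, hQ.2 x₀, one_mul]
  have hkey : (1 + θ) * v x₀ = w x₀ + θ * Q.mulVec v x₀ := by
    have := congrFun hvw x₀
    rw [mulVec_resolvent] at this
    linarith
  have h1 : (1 + θ) * |v x₀| ≤ ‖w‖ + θ * |v x₀| := by
    calc (1 + θ) * |v x₀| = |(1 + θ) * v x₀| := by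
          rw [abs_mul, abs_of_nonneg (by linarith : (0:ℝ) ≤ 1 + θ)]
      _ = |w x₀ + θ * Q.mulVec v x₀| := by rw [hkey]
      _ ≤ |w x₀| + θ * |Q.mulVec v x₀| := by
          refine (abs_add_le _ _).trans ?_
          rw [abs_mul, abs_of_nonneg hθ.le]
      _ ≤ ‖w‖ + θ * |v x₀| := by
          have := norm_le_pi_norm w x₀
          rw [Real.norm_eq_abs] at this
          nlinarith
  have hvx₀ : |v x₀| ≤ ‖w‖ := by linarith
  refine (pi_norm_le_iff_of_nonneg (le_trans (abs_nonneg _) hvx₀)).mpr fun z => ?_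
  rw [Real.norm_eq_abs]
  exact le_trans (hx₀ z (Finset.mem_univ z)) hvx₀

lemma resolvent_isUnit {Q : Matrix 𝔛 𝔛 ℝ} (hQ : IsStochastic Q) {θ : ℝ} (hθ : 0 < θ) :
    IsUnit (1 - θ • (Q - 1)) := by
  rw [← Matrix.mulVec_injective_iff_isUnit]
  intro v v' hvv'
  have h0 : (1 - θ • (Q - 1)).mulVec (v - v') = 0 := by
    rw [Matrix.mulVec_sub, hvv', sub_self]
  have := resolvent_bound hQ hθ h0
  rw [norm_zero, norm_le_zero_iff] at this
  exact sub_eq_zero.mp this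

end Stmt16Aux

/-- The resolvent limit used in Proposition 3.8: (I − G^θ)⁻¹_{xx} → μ_x as θ → ∞. -/
theorem stmt16
    {𝔛 : Type*} [Fintype 𝔛] [DecidableEq 𝔛]
    (Q : Matrix 𝔛 𝔛 ℝ) (hQ : IsStochastic Q)
    (hirr : IrreducibleMat Q)
    (haper : ∀ x, ∀ d : ℕ, (∀ m, 1 ≤ m → 0 < (Q ^ m) x x → d ∣ m) → d = 1)
    (μ : 𝔛 → ℝ) (hμ0 : ∀ x, 0 ≤ μ x) (hμ1 : ∑ x, μ x = 1)
    (hμQ : ∀ y, ∑ x, μ x * Q x y = μ y) :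
    (∀ θ : ℝ, 0 < θ → IsUnit (1 - θ • (Q - 1))) ∧
    ∀ x, Tendsto (fun θ : ℝ => ((1 - θ • (Q - 1))⁻¹) x x) atTop (nhds (μ x)) := by
  haveI hne : Nonempty 𝔛 := by
    by_contra hn
    rw [not_nonempty_iff] at hn
    rw [Finset.univ_eq_empty, Finset.sum_empty] at hμ1
    exact zero_ne_one hμ1
  refine ⟨fun θ hθ => Stmt16Aux.resolvent_isUnit hQ hθ, fun x => ?_⟩
  classical
  -- the auxiliary matrix B' = (I - Q) + (rank-one with rows μ)
  set B' : Matrix 𝔛 𝔛 ℝ := (1 - Q) + Matrix.of (fun _ y => μ y) with hB'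
  have hB'mulVec : ∀ v : 𝔛 → ℝ, ∀ z,
      B'.mulVec v z = (v z - Q.mulVec v z) + ∑ y, μ y * v y := by
    intro v z
    simp [hB', Matrix.add_mulVec, Matrix.sub_mulVec, Matrix.one_mulVec,
      Matrix.mulVec, dotProduct, sub_mul, add_mul, Finset.sum_add_distrib,
      Finset.sum_sub_distrib, Matrix.one_apply, ite_mul]
  have hB'inj : Function.Injective B'.mulVec := by
    intro v u hvu
    have hd0 : B'.mulVec (v - u) = 0 := by rw [Matrix.mulVec_sub, hvu, sub_self]
    set d := v - u with hdd
    have hdz : ∀ z, (d z - Q.mulVec d z) + ∑ y, μ y * d y = 0 := by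
      intro z
      rw [← hB'mulVec d z, hd0]; rfl
    have hexp : ∑ z, μ z * Q.mulVec d z = ∑ y, μ y * d y := by
      calc ∑ z, μ z * Q.mulVec d z
          = ∑ z, ∑ y, μ z * Q z y * d y := by
            simp [Matrix.mulVec, dotProduct, Finset.mul_sum, mul_assoc]
        _ = ∑ y, ∑ z, μ z * Q z y * d y := Finset.sum_comm
        _ = ∑ y, (∑ z, μ z * Q z y) * d y := by simp [Finset.sum_mul]
        _ = ∑ y, μ y * d y := by simp [hμQ]
    have hsum0 : ∑ z, μ z * ((d z - Q.mulVec d z) + ∑ y, μ y * d y) = 0 := by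
      simp only [hdz, mul_zero, Finset.sum_const_zero]
    have hexpand : ∑ z, μ z * ((d z - Q.mulVec d z) + ∑ y, μ y * d y)
        = (∑ z, μ z * d z) - (∑ z, μ z * Q.mulVec d z)
          + (∑ z, μ z) * (∑ y, μ y * d y) := by
      simp [mul_add, mul_sub, Finset.sum_add_distrib, Finset.sum_sub_distrib, Finset.sum_mul]
    have hs : ∑ y, μ y * d y = 0 := by
      rw [hexpand, hexp, hμ1, one_mul] at hsum0
      linarith
    have hharm : Q.mulVec d = d := by
      funext z
      have := hdz z
      rw [hs, add_zero] at this
      linarith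
    have hconst := Stmt16Aux.harmonic_const hQ hirr hharm
    obtain ⟨z₀⟩ := hne
    have hdz₀ : d z₀ = 0 := by
      have : ∑ y, μ y * d y = (∑ y, μ y) * d z₀ := by
        rw [Finset.sum_mul]
        exact Finset.sum_congr rfl fun y _ => by rw [hconst y z₀]
      rw [hs, hμ1, one_mul] at this
      exact this.symm
    have : d = 0 := funext fun z => by rw [hconst z z₀, hdz₀]; rfl
    exact sub_eq_zero.mp this
  have hB'unit : IsUnit B' := Matrix.mulVec_injective_iff_isUnit.mp hB'inj
  have hB'det : IsUnit B'.det := (Matrix.isUnit_iff_isUnit_det _).mp hB'unit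
  set f := LinearMap.toContinuousLinearMap (Matrix.mulVecLin (B'⁻¹)) with hf
  have hcoer : ∀ v : 𝔛 → ℝ, ‖v‖ ≤ ‖f‖ * ‖B'.mulVec v‖ := by
    intro v
    have hv : (B'⁻¹).mulVec (B'.mulVec v) = v := by
      rw [Matrix.mulVec_mulVec, Matrix.nonsing_inv_mul _ hB'det, Matrix.one_mulVec]
    calc ‖v‖ = ‖f (B'.mulVec v)‖ := by
          rw [hf]
          simp only [LinearMap.coe_toContinuousLinearMap', Matrix.mulVecLin_apply, hv]
      _ ≤ ‖f‖ * ‖B'.mulVec v‖ := f.le_opNorm _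
  set w : 𝔛 → ℝ := fun y => (if y = x then (1:ℝ) else 0) - μ x with hw
  set C : ℝ := ‖f‖ * (2 * ‖w‖) with hC
  have key : ∀ θ : ℝ, 0 < θ → |((1 - θ • (Q - 1))⁻¹) x x - μ x| ≤ C * θ⁻¹ := by
    intro θ hθ
    set A : Matrix 𝔛 𝔛 ℝ := 1 - θ • (Q - 1) with hA
    have hAunit : IsUnit A := Stmt16Aux.resolvent_isUnit hQ hθ
    have hAdet : IsUnit A.det := (Matrix.isUnit_iff_isUnit_det _).mp hAunit
    set u : 𝔛 → ℝ := fun y => A⁻¹ y x with hu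
    set r : 𝔛 → ℝ := fun y => u y - μ x with hr
    have hAu : A.mulVec u = fun y => if y = x then 1 else 0 := by
      funext z
      have h1 : (A * A⁻¹) z x = (1 : Matrix 𝔛 𝔛 ℝ) z x := by
        rw [Matrix.mul_nonsing_inv _ hAdet]
      simpa [Matrix.mul_apply, Matrix.one_apply, Matrix.mulVec, dotProduct, hu] using h1
    have hones : A.mulVec (fun _ => μ x) = fun _ => μ x := by
      funext z
      rw [hA, Stmt16Aux.mulVec_resolvent]
      have hq1 : Q.mulVec (fun _ => μ x) z = μ x := by
        simp [Matrix.mulVec, dotProduct, ← Finset.sum_mul, hQ.2 z]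
      rw [hq1]; ring
    have hAr : A.mulVec r = w := by
      have hrw : r = u - (fun _ => μ x) := rfl
      rw [hrw, Matrix.mulVec_sub, hAu, hones]
      funext z
      simp [hw]
    have hb1 : ‖r‖ ≤ ‖w‖ := Stmt16Aux.resolvent_bound hQ hθ (by rw [← hA]; exact hAr)
    have hvecQ : Matrix.vecMul μ Q = μ := by
      funext z
      simpa [Matrix.vecMul, dotProduct] using hμQ z
    have hAentry : ∀ w' z, A w' z = (1 + θ) * (if w' = z then (1:ℝ) else 0) - θ * Q w' z := by
      intro w' z
      simp only [hA, Matrix.sub_apply, Matrix.smul_apply, Matrix.one_apply, smul_eq_mul]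
      split_ifs <;> ring
    have hvecA : Matrix.vecMul μ A = μ := by
      funext z
      have hc : ∀ w', μ w' * A w' z
          = (1 + θ) * (μ w' * (if w' = z then (1:ℝ) else 0)) - θ * (μ w' * Q w' z) := by
        intro w'; rw [hAentry]; ring
      have : Matrix.vecMul μ A z = ∑ w', μ w' * A w' z := by
        simp [Matrix.vecMul, dotProduct]
      rw [this]
      simp only [hc, Finset.sum_sub_distrib, ← Finset.mul_sum, mul_ite, mul_one, mul_zero,
        Finset.sum_ite_eq', Finset.mem_univ, if_true, hμQ z]
      ring
    have hvecAinv : Matrix.vecMul μ A⁻¹ = μ := by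
      calc Matrix.vecMul μ A⁻¹ = Matrix.vecMul (Matrix.vecMul μ A) A⁻¹ := by rw [hvecA]
        _ = Matrix.vecMul μ (A * A⁻¹) := by rw [Matrix.vecMul_vecMul]
        _ = μ := by rw [Matrix.mul_nonsing_inv _ hAdet, Matrix.vecMul_one]
    have hμr : ∑ y, μ y * r y = 0 := by
      have h1 : ∑ y, μ y * u y = μ x := by
        have := congrFun hvecAinv x
        simpa [Matrix.vecMul, dotProduct, hu] using this
      simp [hr, mul_sub, Finset.sum_sub_distrib, h1, ← Finset.sum_mul, hμ1]
    have hBr : B'.mulVec r = θ⁻¹ • (w - r) := by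
      funext z
      rw [hB'mulVec r z, hμr, add_zero]
      have hz := congrFun hAr z
      rw [hA, Stmt16Aux.mulVec_resolvent] at hz
      have hθ' : θ ≠ 0 := ne_of_gt hθ
      have hval : r z - Q.mulVec r z = θ⁻¹ * (w z - r z) := by
        field_simp
        linear_combination hz
      simpa using hval
    have hnr : ‖r‖ ≤ ‖f‖ * (θ⁻¹ * (‖w‖ + ‖r‖)) := by
      calc ‖r‖ ≤ ‖f‖ * ‖B'.mulVec r‖ := hcoer r
        _ = ‖f‖ * (θ⁻¹ * ‖w - r‖) := by
            rw [hBr, norm_smul, Real.norm_eq_abs, abs_of_pos (inv_pos.mpr hθ)]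
        _ ≤ ‖f‖ * (θ⁻¹ * (‖w‖ + ‖r‖)) :=
            mul_le_mul_of_nonneg_left
              (mul_le_mul_of_nonneg_left (norm_sub_le _ _) (inv_pos.mpr hθ).le)
              (norm_nonneg _)
    have hrx : |r x| ≤ ‖r‖ := by
      have := norm_le_pi_norm r x
      rwa [Real.norm_eq_abs] at this
    have hfin : ‖r‖ ≤ C * θ⁻¹ := by
      have h3 : ‖f‖ * (θ⁻¹ * (‖w‖ + ‖r‖)) ≤ ‖f‖ * (θ⁻¹ * (2 * ‖w‖)) :=
        mul_le_mul_of_nonneg_left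
          (mul_le_mul_of_nonneg_left (by linarith) (inv_pos.mpr hθ).le)
          (norm_nonneg _)
      calc ‖r‖ ≤ ‖f‖ * (θ⁻¹ * (‖w‖ + ‖r‖)) := hnr
        _ ≤ ‖f‖ * (θ⁻¹ * (2 * ‖w‖)) := h3
        _ = C * θ⁻¹ := by rw [hC]; ring
    have hur : ((1 - θ • (Q - 1))⁻¹) x x - μ x = r x := by rw [hr, hu, hA]
    rw [hur]
    exact le_trans hrx hfin
  rw [tendsto_iff_dist_tendsto_zero]
  have hCg : Tendsto (fun θ : ℝ => C * θ⁻¹) atTop (nhds 0) := by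
    simpa using tendsto_inv_atTop_zero.const_mul C
  refine squeeze_zero' ?_ ?_ hCg
  · filter_upwards with θ using dist_nonneg
  · filter_upwards [eventually_gt_atTop (0:ℝ)] with θ hθ
    rw [Real.dist_eq]
    exact key θ hθ
end

section
/- Let θ > 0 and P ∼ GEM(θ). Then for every r ≥ 1, all distinct positive integers i₁,…,i_r, all nonnegative reals η₁,…,η_r with Σ_{j=1}^r η_j ≤ 1, and every δ > 0, P(P_{i_j} > η_j − δ for all 1 ≤ j ≤ r) > 0. -/
open MeasureTheory ProbabilityTheory Matrix Filter

/-!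
Stick-breaking can be inverted: any sequence of nonnegative weights with total mass at most `1`
is the stick sequence of some `x ∈ [0, 1]^ℕ`, with `x_i = p_i / (1 - p_0 - ⋯ - p_{i-1})`.
Placing the weight `η_j` at position `i_j` (adding weights that share a position) gives such an
`x` with `P_{i_j}(x) ≥ η_j`. The set of `x` with `P_{i_j}(x) > η_j - δ` for all `j` is open in
the product topology, so it contains a cylinder around a point of `(0, 1)^ℕ`; each of its
finitely many factors has positive Beta probability, and independence multiplies them.
-/

open Finset in
theorem exists_stick_eq {p : ℕ → ℝ} (hp0 : ∀ i, 0 ≤ p i)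
    (hp1 : ∀ n, ∑ i ∈ range n, p i ≤ 1) :
    ∃ x : ℕ → ℝ, (∀ i, x i ∈ Set.Icc 0 1) ∧ ∀ n, stick (fun i x => x i) n x = p n := by
  set S : ℕ → ℝ := fun n => ∑ i ∈ range n, p i
  have hpS : ∀ n, p n ≤ 1 - S n := fun n => by
    have := hp1 (n + 1); rw [sum_range_succ] at this; linarith
  refine ⟨fun n => p n / (1 - S n), fun n => ?_, ?_⟩
  · have hS : 0 ≤ 1 - S n := (hp0 n).trans (hpS n)
    exact ⟨div_nonneg (hp0 n) hS, div_le_one_of_le₀ (hpS n) hS⟩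
  have hxS : ∀ n, p n / (1 - S n) * (1 - S n) = p n := fun n => by
    -- Once the stick is used up, `p n = 0`, so the junk value `p n / 0 = 0` is harmless.
    rcases eq_or_ne (1 - S n) 0 with h | h
    · rw [h]; linarith [hpS n, hp0 n]
    · exact div_mul_cancel₀ _ h
  have hprod : ∀ n, ∏ i ∈ range n, (1 - p i / (1 - S i)) = 1 - S n := by
    intro n
    induction n with
    | zero => simp [S]
    | succ n ih =>
      rw [prod_range_succ, ih]
      simp only [S, sum_range_succ]
      linear_combination -hxS n
  intro n
  rw [stick, hprod, hxS]

open Finset in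
theorem exists_stick_ge {ι : Type*} [Fintype ι] (idx : ι → ℕ) {η : ι → ℝ} (hη0 : ∀ j, 0 ≤ η j)
    (hη1 : ∑ j, η j ≤ 1) :
    ∃ x : ℕ → ℝ, (∀ i, x i ∈ Set.Icc 0 1) ∧ ∀ j, η j ≤ stick (fun i x => x i) (idx j) x := by
  set p : ℕ → ℝ := fun i => ∑ j, if idx j = i then η j else 0
  have hite_nonneg : ∀ j i, 0 ≤ if idx j = i then η j else 0 := fun j i => by
    split_ifs
    exacts [hη0 j, le_rfl]
  have hp1 : ∀ n, ∑ i ∈ range n, p i ≤ 1 := fun n => calc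
    ∑ i ∈ range n, p i = ∑ j, if idx j ∈ range n then η j else 0 := by
      simp only [p]; rw [sum_comm]; simp only [sum_ite_eq]
    _ ≤ ∑ j, η j := sum_le_sum fun j _ => by split_ifs <;> simp [hη0 j]
    _ ≤ 1 := hη1
  obtain ⟨x, hx01, hxp⟩ := exists_stick_eq (fun i => sum_nonneg fun j _ => hite_nonneg j i) hp1
  refine ⟨x, hx01, fun j => ?_⟩
  rw [hxp]
  simpa using single_le_sum (fun j' _ => hite_nonneg j' (idx j)) (mem_univ j)

theorem continuous_stick_coord (n : ℕ) :
    Continuous fun x : ℕ → ℝ => stick (fun i x => x i) n x := by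
  unfold stick; fun_prop

theorem beta1_pos_of_isOpen {θ : ℝ} (hθ : 0 < θ) {V : Set ℝ} (hV : IsOpen V)
    (hVne : (V ∩ Set.Ioo 0 1).Nonempty) : 0 < beta1 θ V := by
  have hdens : Measurable fun x : ℝ => ENNReal.ofReal (θ * (1 - x) ^ (θ - 1)) := by fun_prop
  rw [beta1, withDensity_apply _ hV.measurableSet, Measure.restrict_restrict hV.measurableSet,
    setLIntegral_pos_iff hdens]
  have hsub : V ∩ Set.Ioo 0 1 ⊆
      Function.support (fun x : ℝ => ENNReal.ofReal (θ * (1 - x) ^ (θ - 1))) ∩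
        (V ∩ Set.Icc 0 1) := fun x hx =>
    ⟨(ENNReal.ofReal_pos.mpr (mul_pos hθ (Real.rpow_pos_of_pos (by linarith [hx.2.2]) _))).ne',
      hx.1, Set.Ioo_subset_Icc_self hx.2⟩
  exact (hV.inter isOpen_Ioo).measure_pos volume hVne |>.trans_le (measure_mono hsub)

theorem ProbabilityTheory.iIndepFun.measure_preimage_pos_of_isOpen
    {Ω ι β : Type*} [MeasurableSpace Ω] {μ : Measure Ω}
    [TopologicalSpace β] [MeasurableSpace β] [OpensMeasurableSpace β]
    {X : ι → Ω → β} (hX : iIndepFun X μ) {S : Set β}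
    (hpos : ∀ i V, IsOpen V → (V ∩ S).Nonempty → 0 < μ (X i ⁻¹' V))
    {U : Set (ι → β)} (hU : IsOpen U) (hUS : (U ∩ Set.univ.pi fun _ => S).Nonempty) :
    0 < μ ((fun ω i => X i ω) ⁻¹' U) := by
  obtain ⟨y, hyU, hyS⟩ := hUS
  obtain ⟨I, u, hu, hIU⟩ := isOpen_pi_iff.mp hU y hyU
  have hcyl : (⋂ i ∈ I, X i ⁻¹' u i) ⊆ (fun ω i => X i ω) ⁻¹' U := fun ω hω =>
    hIU fun i hi => Set.mem_iInter₂.mp hω i hi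
  refine lt_of_lt_of_le ?_ (measure_mono hcyl)
  rw [hX.measure_inter_preimage_eq_mul I fun i hi => (hu i hi).1.measurableSet]
  exact CanonicallyOrderedAdd.prod_pos.mpr fun i hi =>
    hpos i (u i) (hu i hi).1 ⟨y i, (hu i hi).2, hyS i trivial⟩

theorem stmt17_general
    {Ω : Type*} [MeasurableSpace Ω] (Pr : Measure Ω)
    (θ : ℝ) (hθ : 0 < θ)
    (X : ℕ → Ω → ℝ) (hXmeas : ∀ j, Measurable (X j))
    (hXiid : iIndepFun X Pr)
    (hXlaw : ∀ j, Measure.map (X j) Pr = beta1 θ)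
    (r : ℕ) (idx : Fin r → ℕ)
    (η : Fin r → ℝ) (hη0 : ∀ j, 0 ≤ η j) (hη1 : ∑ j, η j ≤ 1)
    (δ : ℝ) (hδ : 0 < δ) :
    0 < Pr {ω | ∀ j, η j - δ < stick X (idx j) ω} := by
  set U : Set (ℕ → ℝ) := {x | ∀ j, η j - δ < stick (fun i x => x i) (idx j) x}
  have hU : IsOpen U := by
    simp only [U, Set.ofPred_forall]
    exact isOpen_iInter_of_finite fun j => isOpen_lt continuous_const (continuous_stick_coord _)
  obtain ⟨x, hx01, hxη⟩ := exists_stick_ge idx hη0 hη1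
  have hxU : x ∈ U := fun j => by linarith [hxη j]
  -- `x` may have coordinates `0` or `1`, but lies in the closure of `(0, 1)^ℕ`.
  have hUS : (U ∩ Set.univ.pi fun _ => Set.Ioo 0 1).Nonempty := by
    refine mem_closure_iff.mp ?_ U hU hxU
    rw [closure_pi_set, closure_Ioo zero_ne_one]
    exact fun i _ => hx01 i
  refine hXiid.measure_preimage_pos_of_isOpen (fun i V hV hVne => ?_) hU hUS
  rw [← Measure.map_apply (hXmeas i) hV.measurableSet, hXlaw i]
  exact beta1_pos_of_isOpen hθ hV hVne

/-- Full support of the GEM(θ) stick lengths, as used in Proposition 3.7. -/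
theorem stmt17
    {Ω : Type*} [MeasurableSpace Ω] (Pr : Measure Ω) [IsProbabilityMeasure Pr]
    (θ : ℝ) (hθ : 0 < θ)
    (X : ℕ → Ω → ℝ) (hXmeas : ∀ j, Measurable (X j))
    (hXiid : iIndepFun X Pr)
    (hXlaw : ∀ j, Measure.map (X j) Pr = beta1 θ)
    (r : ℕ) (hr : 1 ≤ r) (idx : Fin r → ℕ) (hidx : Function.Injective idx)
    (η : Fin r → ℝ) (hη0 : ∀ j, 0 ≤ η j) (hη1 : ∑ j, η j ≤ 1)
    (δ : ℝ) (hδ : 0 < δ) :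
    0 < Pr {ω | ∀ j, η j - δ < stick X (idx j) ω} :=
  stmt17_general Pr θ hθ X hXmeas hXiid hXlaw r idx η hη0 hη1 δ hδ
end
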